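/- arXiv:2510.10279 — 2 statements merged into one kernel-verified Lean document; each statement's English description precedes it below -/
import Mathlib

section
/- Let f : Ω → ℝ be a smooth convex function on an open convex set Ω ⊆ ℝⁿ containing 0, with f(0) = 3, f ≥ 3, ∇f(0) = 0, such that the graph of f is a complete hypersurface and ⟨∇f(x), x/|x|⟩ ≥ η > 0 outside a fixed ball B(0,η₁) ⋐ Ω. Then for every x → ∂Ω (either |x| → ∞ or x converging to a finite boundary point), f(x) → ∞. -/
open Set Metric Filter
open scoped RealInnerProductSpace

section aux
variable {n : ℕ}

/-- growth lemma: linear growth of `f` outside the ball. -/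
theorem stmt11_growth (Ω : Set (EuclideanSpace ℝ (Fin n)))
    (hΩopen : IsOpen Ω) (hΩconv : Convex ℝ Ω)
    (h0 : (0 : EuclideanSpace ℝ (Fin n)) ∈ Ω)
    (f : EuclideanSpace ℝ (Fin n) → ℝ)
    (hf : ContDiffOn ℝ (⊤ : ℕ∞) f Ω)
    (hf3 : ∀ x ∈ Ω, 3 ≤ f x)
    (η η₁ : ℝ) (hη : 0 < η) (hη₁ : 0 < η₁)
    (hradial : ∀ x ∈ Ω \ ball (0 : EuclideanSpace ℝ (Fin n)) η₁,
      η ≤ ⟪gradient f x, ‖x‖⁻¹ • x⟫)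
    {x : EuclideanSpace ℝ (Fin n)} (hx : x ∈ Ω) (hxn : η₁ ≤ ‖x‖) :
    3 + η * (‖x‖ - η₁) ≤ f x := by
  have hdiff : ∀ y ∈ Ω, DifferentiableAt ℝ f y := fun y hy =>
    (hf.contDiffAt (hΩopen.mem_nhds hy)).differentiableAt (by simp)
  have hxpos : (0:ℝ) < ‖x‖ := lt_of_lt_of_le hη₁ hxn
  set u : EuclideanSpace ℝ (Fin n) := ‖x‖⁻¹ • x with hu
  have hnu : ‖u‖ = 1 := by
    rw [hu, norm_smul, norm_inv, norm_norm, inv_mul_cancel₀ hxpos.ne']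
  have hmem : ∀ t ∈ Icc (0:ℝ) ‖x‖, t • u ∈ Ω := by
    intro t ht
    have : t • u = (t * ‖x‖⁻¹) • x := by rw [hu, smul_smul]
    rw [this]
    refine hΩconv.smul_mem_of_zero_mem h0 hx
      ⟨mul_nonneg ht.1 (inv_nonneg.2 (norm_nonneg _)), ?_⟩
    rw [← div_eq_mul_inv, div_le_one hxpos]
    exact ht.2
  set g : ℝ → ℝ := fun t => f (t • u) with hg
  have hderiv : ∀ t ∈ Icc (0:ℝ) ‖x‖,
      HasDerivAt g ⟪gradient f (t • u), u⟫ t := by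
    intro t ht
    have hy : t • u ∈ Ω := hmem t ht
    have h1 : HasFDerivAt f ((InnerProductSpace.toDual ℝ _) (gradient f (t • u))) (t • u) :=
      (hdiff _ hy).hasGradientAt.hasFDerivAt
    have h2 : HasDerivAt (fun s : ℝ => s • u) u t := by
      simpa using (hasDerivAt_id t).smul_const u
    exact h1.comp_hasDerivAt t h2
  have hsub : Icc η₁ ‖x‖ ⊆ Icc 0 ‖x‖ := Icc_subset_Icc hη₁.le le_rfl
  have hcont : ContinuousOn g (Icc η₁ ‖x‖) := fun t ht =>
    ((hderiv t (hsub ht)).continuousAt).continuousWithinAt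
  have hdiffg : DifferentiableOn ℝ g (interior (Icc η₁ ‖x‖)) := by
    intro t ht
    exact ((hderiv t (hsub (interior_subset ht))).differentiableAt).differentiableWithinAt
  have hge : ∀ t ∈ interior (Icc η₁ ‖x‖), η ≤ deriv g t := by
    intro t ht
    rw [interior_Icc] at ht
    have ht' : t ∈ Icc (0:ℝ) ‖x‖ := ⟨(hη₁.trans ht.1).le, ht.2.le⟩
    have hy : t • u ∈ Ω := hmem t ht'
    have htpos : 0 < t := hη₁.trans ht.1
    have hny : ‖t • u‖ = t := by
      rw [norm_smul, hnu, Real.norm_eq_abs, abs_of_pos htpos, mul_one]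
    have hnb : t • u ∉ ball (0 : EuclideanSpace ℝ (Fin n)) η₁ := by
      simp [mem_ball, dist_eq_norm, hny]; linarith [ht.1]
    have := hradial (t • u) ⟨hy, hnb⟩
    rw [(hderiv t ht').deriv]
    have hid : ‖t • u‖⁻¹ • (t • u) = u := by
      rw [hny, smul_smul, inv_mul_cancel₀ htpos.ne', one_smul]
    rwa [hid] at this
  have key := Convex.mul_sub_le_image_sub_of_le_deriv (convex_Icc η₁ ‖x‖) hcont hdiffg hge
    η₁ ⟨le_rfl, hxn⟩ ‖x‖ ⟨hxn, le_rfl⟩ hxn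
  have hgx : g ‖x‖ = f x := by
    rw [hg]; simp only []
    congr 1
    rw [hu, smul_smul, mul_inv_cancel₀ hxpos.ne', one_smul]
  have hg1 : 3 ≤ g η₁ := hf3 _ (hmem η₁ ⟨hη₁.le, hxn⟩)
  rw [hgx] at key
  linarith

end aux

/-- for a smooth convex `f` on an open convex `Ω ∋ 0` with
`f(0) = 3`, `f ≥ 3`, `∇f(0) = 0`, whose graph is a complete hypersurface
(encoded: the graph is a closed subset of `ℝⁿ × ℝ`), and whose radial derivative
satisfies `⟨∇f(x), x/|x|⟩ ≥ η > 0` outside a ball `B(0,η₁) ⋐ Ω`, the function `f`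
tends to `∞` as `x → ∂Ω` (i.e. as `x` leaves every compact subset of `Ω`,
covering both `|x| → ∞` and convergence to a finite boundary point). -/
theorem stmt_11 {n : ℕ} (Ω : Set (EuclideanSpace ℝ (Fin n)))
    (hΩopen : IsOpen Ω) (hΩconv : Convex ℝ Ω)
    (h0 : (0 : EuclideanSpace ℝ (Fin n)) ∈ Ω)
    (f : EuclideanSpace ℝ (Fin n) → ℝ)
    (hf : ContDiffOn ℝ (⊤ : ℕ∞) f Ω) (hconv : ConvexOn ℝ Ω f)
    (hf0 : f 0 = 3) (hf3 : ∀ x ∈ Ω, 3 ≤ f x)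
    (hgrad0 : gradient f 0 = 0)
    (η η₁ : ℝ) (hη : 0 < η) (hη₁ : 0 < η₁)
    (hball : closedBall (0 : EuclideanSpace ℝ (Fin n)) η₁ ⊆ Ω)
    (hradial : ∀ x ∈ Ω \ ball (0 : EuclideanSpace ℝ (Fin n)) η₁,
      η ≤ ⟪gradient f x, ‖x‖⁻¹ • x⟫)
    (hcomplete : IsClosed {p : EuclideanSpace ℝ (Fin n) × ℝ | p.1 ∈ Ω ∧ f p.1 = p.2}) :
    Tendsto (fun x : Ω => f x) (cocompact Ω) atTop := by
  rw [Filter.tendsto_atTop]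
  intro C
  obtain ⟨C', hC'⟩ : ∃ c : ℝ, c = max C 3 := ⟨_, rfl⟩
  obtain ⟨R, hR⟩ : ∃ r : ℝ, r = η₁ + C' / η := ⟨_, rfl⟩
  have hCC' : C ≤ C' := hC' ▸ le_max_left C 3
  have h3C' : (3:ℝ) ≤ C' := hC' ▸ le_max_right C 3
  set G : Set (EuclideanSpace ℝ (Fin n) × ℝ) :=
    {p | p.1 ∈ Ω ∧ f p.1 = p.2} with hG
  set T : Set (EuclideanSpace ℝ (Fin n) × ℝ) :=
    G ∩ (closedBall (0 : EuclideanSpace ℝ (Fin n)) R ×ˢ Icc (3:ℝ) C') with hT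
  have hTcomp : IsCompact T :=
    ((isCompact_closedBall _ _).prod isCompact_Icc).inter_left hcomplete
  set K : Set (EuclideanSpace ℝ (Fin n)) := Prod.fst '' T with hK
  have hKcomp : IsCompact K := hTcomp.image continuous_fst
  have hKsub : K ⊆ Ω := by
    rintro y ⟨p, ⟨hp, _⟩, rfl⟩
    exact hp.1
  set K' : Set Ω := Subtype.val ⁻¹' K with hK'
  have hK'comp : IsCompact K' := by
    rw [Subtype.isCompact_iff]
    have : Subtype.val '' K' = K := by
      apply Subset.antisymm (image_preimage_subset _ _)
      intro y hy
      exact ⟨⟨y, hKsub hy⟩, hy, rfl⟩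
    rwa [this]
  refine (hasBasis_cocompact.eventually_iff).2 ⟨K', hK'comp, ?_⟩
  rintro ⟨x, hxΩ⟩ hx
  simp only [mem_compl_iff, hK', mem_preimage] at hx
  by_contra hlt
  push_neg at hlt
  have hfC' : f x ≤ C' := le_trans hlt.le hCC'
  apply hx
  have hdpos : 0 < C' / η := div_pos (by linarith) hη
  have hxR : ‖x‖ ≤ R := by
    by_contra hgt
    push_neg at hgt
    have hxn : η₁ ≤ ‖x‖ := by nlinarith
    have hgrow := stmt11_growth Ω hΩopen hΩconv h0 f hf hf3 η η₁ hη hη₁ hradial hxΩ hxn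
    have h2 : C' < η * (‖x‖ - η₁) := by
      have h3 : C' / η < ‖x‖ - η₁ := by linarith
      calc C' = η * (C' / η) := by field_simp
        _ < η * (‖x‖ - η₁) := mul_lt_mul_of_pos_left h3 hη
    linarith
  exact ⟨(x, f x), ⟨⟨hxΩ, rfl⟩, by
    simpa [mem_closedBall, dist_eq_norm] using hxR, hf3 x hxΩ, hfC'⟩, rfl⟩
end

section
/- Let k : [0,∞) → [0,∞) be measurable with ∫₀^R s·k(s) ds ≤ ε'(R)·R for all large R, where ε'(R) is non-increasing with ε'(R) → 0 as R → ∞. Suppose m : [0,∞) → (−∞,0] satisfies −m(t) ≤ C·t for all t ≥ 1 and there is a constant C₁ > 0 with −m(t) ≤ C₁[(1 + t(1−m(t))/R²)·∫₀^R s k(s) ds − t·m(t)(1−m(t))/R²] for all R > 0 and t ≥ 1. Then −m(t) = o(t) as t → ∞. -/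
open Filter MeasureTheory

set_option maxHeartbeats 1000000 in
/-- bootstrap lemma from the proof of the Ni–Tam-type Ricci
flatness theorem: if `∫₀^R s k(s) ds ≤ ε'(R)·R` for all large `R`, with `ε'`
non-increasing and `ε'(R) → 0`, and `m ≤ 0` satisfies the rough bound
`−m(t) ≤ C t` for `t ≥ 1` together with the estimate
`−m(t) ≤ C₁[(1 + t(1−m(t))/R²)·∫₀^R s k(s) ds − t·m(t)(1−m(t))/R²]`
for all `R > 0` and `t ≥ 1`, then `−m(t) = o(t)` as `t → ∞`. -/
theorem stmt_19 (k : ℝ → ℝ) (hkmeas : Measurable k) (hknonneg : ∀ s, 0 ≤ s → 0 ≤ k s)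
    (eps' : ℝ → ℝ) (heps'mono : ∀ R₁ R₂ : ℝ, R₁ ≤ R₂ → eps' R₂ ≤ eps' R₁)
    (heps'lim : Tendsto eps' atTop (nhds 0))
    (hint : ∀ᶠ R in atTop, ∫ s in (0:ℝ)..R, s * k s ≤ eps' R * R)
    (m : ℝ → ℝ) (hm : ∀ t, m t ≤ 0)
    (C : ℝ) (hC : 0 < C) (hrough : ∀ t : ℝ, 1 ≤ t → -m t ≤ C * t)
    (C₁ : ℝ) (hC₁ : 0 < C₁)
    (hest : ∀ R : ℝ, 0 < R → ∀ t : ℝ, 1 ≤ t →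
      -m t ≤ C₁ * ((1 + t * (1 - m t) / R ^ 2) * (∫ s in (0:ℝ)..R, s * k s)
        - t * m t * (1 - m t) / R ^ 2)) :
    Tendsto (fun t => -m t / t) atTop (nhds 0) := by
  rw [Metric.tendsto_atTop]
  intro ε hε
  set K := C₁ * C * (1 + C) with hK
  have hKpos : 0 < K := by positivity
  set δ := Real.sqrt (ε / (4 * K)) with hδ
  have hδpos : 0 < δ := Real.sqrt_pos.2 (by positivity)
  have hδsq : K * δ ^ 2 = ε / 4 := by
    rw [hδ, Real.sq_sqrt (by positivity)]
    field_simp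
  set η₀ := ε * δ / (4 * C₁ * (1 + (1 + C) * δ ^ 2)) with hη₀
  have hden : 0 < 1 + (1 + C) * δ ^ 2 := by positivity
  have hη₀pos : 0 < η₀ := by positivity
  have hη₀eq : C₁ * (1 + (1 + C) * δ ^ 2) * η₀ = ε * δ / 4 := by
    rw [hη₀]; field_simp
  clear_value δ
  clear_value η₀
  clear_value K
  have hsmall : ∀ᶠ R in atTop, eps' R ≤ η₀ :=
    heps'lim.eventually (eventually_le_nhds hη₀pos)
  obtain ⟨R₀, hR₀⟩ := (hsmall.and hint).exists_forall_of_atTop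
  refine ⟨max 1 (δ * R₀), fun t ht => ?_⟩
  have ht1 : (1 : ℝ) ≤ t := le_trans (le_max_left _ _) ht
  have htpos : 0 < t := lt_of_lt_of_le one_pos ht1
  set R := t / δ with hR
  have hRpos : 0 < R := div_pos htpos hδpos
  have hRge : R₀ ≤ R := by
    rw [hR, le_div_iff₀ hδpos]
    calc R₀ * δ = δ * R₀ := mul_comm _ _
      _ ≤ max 1 (δ * R₀) := le_max_right _ _
      _ ≤ t := ht
  obtain ⟨heps_small, hI_le⟩ := hR₀ R hRge
  set I := ∫ s in (0:ℝ)..R, s * k s with hIdef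
  have hInonneg : 0 ≤ I := by
    apply intervalIntegral.integral_nonneg hRpos.le
    intro s hs
    exact mul_nonneg hs.1 (hknonneg s hs.1)
  have hrough' := hrough t ht1
  have hm' := hm t
  have hδR : δ * R = t := by
    rw [hR]; field_simp
  -- multiply the key estimate by t to clear the R² denominators
  have key : (C₁ * ((1 + t * (1 - m t) / R ^ 2) * I - t * m t * (1 - m t) / R ^ 2)) * t
      = C₁ * ((t + δ ^ 2 * (1 - m t)) * I - δ ^ 2 * m t * (1 - m t)) := by
    rw [hR, div_pow]
    field_simp
  have hest' := hest R hRpos t ht1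
  rw [← hIdef] at hest'
  clear_value R I
  have H0 : t * (-m t) ≤ C₁ * ((t + δ ^ 2 * (1 - m t)) * I - δ ^ 2 * m t * (1 - m t)) := by
    rw [← key]
    calc t * (-m t) = (-m t) * t := mul_comm _ _
      _ ≤ _ := mul_le_mul_of_nonneg_right hest' htpos.le
  -- bound the second term
  have hsecond : C₁ * (δ ^ 2 * (-m t) * (1 - m t)) ≤ (ε / 4) * t ^ 2 := by
    have h1 : (-m t) * (1 - m t) ≤ (C * t) * ((1 + C) * t) := by
      apply mul_le_mul hrough' (by nlinarith) (by nlinarith) (by positivity)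
    have h2 : δ ^ 2 * ((-m t) * (1 - m t)) ≤ δ ^ 2 * ((C * t) * ((1 + C) * t)) :=
      mul_le_mul_of_nonneg_left h1 (sq_nonneg δ)
    have hδsq' : C₁ * C * (1 + C) * δ ^ 2 = ε / 4 := by rw [← hK]; exact hδsq
    have hr : C₁ * (δ ^ 2 * ((C * t) * ((1 + C) * t))) = ε / 4 * t ^ 2 := by
      linear_combination t ^ 2 * hδsq'
    have h3 := mul_le_mul_of_nonneg_left h2 hC₁.le
    linarith [h3, hr.le, hr.ge]
  -- bound the first term
  have hfirst : C₁ * ((t + δ ^ 2 * (1 - m t)) * I) ≤ (ε / 4) * t ^ 2 := by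
    have hcoef : t + δ ^ 2 * (1 - m t) ≤ (1 + (1 + C) * δ ^ 2) * t := by
      have hb : 1 - m t ≤ (1 + C) * t := by nlinarith [hrough', ht1]
      have hb2 := mul_le_mul_of_nonneg_left hb (sq_nonneg δ)
      linarith [hb2]
    have h1 : (t + δ ^ 2 * (1 - m t)) * I ≤ ((1 + (1 + C) * δ ^ 2) * t) * I :=
      mul_le_mul_of_nonneg_right hcoef hInonneg
    have hδI : δ * I ≤ η₀ * t := by
      calc δ * I ≤ δ * (eps' R * R) := mul_le_mul_of_nonneg_left hI_le hδpos.le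
        _ = eps' R * (δ * R) := by ring
        _ = eps' R * t := by rw [hδR]
        _ ≤ η₀ * t := mul_le_mul_of_nonneg_right heps_small htpos.le
    have h2 : (C₁ * (1 + (1 + C) * δ ^ 2) * t) * (δ * I)
        ≤ (C₁ * (1 + (1 + C) * δ ^ 2) * t) * (η₀ * t) :=
      mul_le_mul_of_nonneg_left hδI (by positivity)
    have h3 : δ * (C₁ * ((t + δ ^ 2 * (1 - m t)) * I)) ≤ δ * ((ε / 4) * t ^ 2) := by
      have h4 : δ * (C₁ * ((t + δ ^ 2 * (1 - m t)) * I))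
          ≤ (C₁ * (1 + (1 + C) * δ ^ 2) * t) * (δ * I) := by
        have h6 := mul_le_mul_of_nonneg_left h1 (by positivity : (0:ℝ) ≤ δ * C₁)
        nlinarith [h6]
      have h5 : (C₁ * (1 + (1 + C) * δ ^ 2) * t) * (η₀ * t) = δ * ((ε / 4) * t ^ 2) := by
        linear_combination t ^ 2 * hη₀eq
      linarith [h2, h4, h5.le, h5.ge]
    exact le_of_mul_le_mul_left h3 hδpos
  have hfinal : t * (-m t) ≤ (ε / 2) * t ^ 2 := by
    have : C₁ * ((t + δ ^ 2 * (1 - m t)) * I - δ ^ 2 * m t * (1 - m t))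
        = C₁ * ((t + δ ^ 2 * (1 - m t)) * I) + C₁ * (δ ^ 2 * (-m t) * (1 - m t)) := by ring
    linarith [H0, hfirst, hsecond, this.le, this.ge]
  have hdiv : -m t / t ≤ ε / 2 := by
    rw [div_le_iff₀ htpos]
    nlinarith [hfinal, htpos]
  have hnonneg : 0 ≤ -m t / t := div_nonneg (neg_nonneg.2 hm') htpos.le
  rw [Real.dist_eq, sub_zero, abs_of_nonneg hnonneg]
  linarith
end
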